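/- For B = M_n(ℂ), the subalgebra T(B) of B ⊗ B^op generated by all a⊗1 - 1⊗a equals N(B) = {Σ a_i ⊗ b_i : Σ a_i b_i = 0 and Σ b_i a_i = 0}. -/

import Mathlib

/-!
Via `a ⊗ b ↦ (x ↦ a * x * b)`, the algebra `B ⊗ Bᵐᵒᵖ` embeds into `End(B)` (injectively for
`B = M_n(ℂ)`). Then `N(B)` consists of the operators that kill `1` and take values in the
trace-free matrices, and each of them is a sum of rank-one operators `x ↦ tr(y x) • z` with `y`,
`z` trace-free. For the swap anti-automorphism `σ (a ⊗ b) = b ⊗ a` one has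
`(b ⊗ 1 - 1 ⊗ b) (a ⊗ 1 - 1 ⊗ a) = b a ⊗ 1 + 1 ⊗ a b - t - σ t` with `t = a ⊗ b`, so
`t + σ t ∈ T(B)` whenever `t ∈ N(B)`; this produces the symmetric combinations of rank-one
operators. The antisymmetric ones are commutators of symmetric ones: writing `m y z` for the
rank-one element, `[m d u + m u d, m d d] = tr(d²) • (m d u - m u d)`, and a trace-free `d` with
`tr(d²) ≠ 0` exists once `n ≥ 2`.
-/

open scoped TensorProduct

/-- The left contraction `B ⊗ B^op → B`, `a ⊗ b ↦ a * b`. -/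
noncomputable def leftContraction (B : Type*) [Ring B] [Algebra ℂ B] :
    B ⊗[ℂ] Bᵐᵒᵖ →ₗ[ℂ] B :=
  (LinearMap.mul' ℂ B).comp
    (TensorProduct.map LinearMap.id (MulOpposite.opLinearEquiv ℂ).symm.toLinearMap)

/-- The right contraction `B ⊗ B^op → B`, `a ⊗ b ↦ b * a`. -/
noncomputable def rightContraction (B : Type*) [Ring B] [Algebra ℂ B] :
    B ⊗[ℂ] Bᵐᵒᵖ →ₗ[ℂ] B :=
  (LinearMap.mul' ℂ B).comp
    ((TensorProduct.map (MulOpposite.opLinearEquiv ℂ).symm.toLinearMap LinearMap.id).comp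
      (TensorProduct.comm ℂ B Bᵐᵒᵖ).toLinearMap)

open MulOpposite

section General

variable {B : Type*} [Ring B] [Algebra ℂ B]

@[simp]
lemma leftContraction_tmul (a : B) (b : Bᵐᵒᵖ) : leftContraction B (a ⊗ₜ b) = a * unop b := rfl

@[simp]
lemma rightContraction_tmul (a : B) (b : Bᵐᵒᵖ) : rightContraction B (a ⊗ₜ b) = unop b * a := rfl

lemma leftContraction_eq_mulLeftRight_apply_one (t : B ⊗[ℂ] Bᵐᵒᵖ) :
    leftContraction B t = AlgHom.mulLeftRight ℂ B t 1 := by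
  induction t using TensorProduct.induction_on with
  | zero => simp
  | tmul a b => simp
  | add u v hu hv => simp [hu, hv]

variable (B) in
def swapOp : B ⊗[ℂ] Bᵐᵒᵖ ≃ₐ[ℂ] (B ⊗[ℂ] Bᵐᵒᵖ)ᵐᵒᵖ :=
  (Algebra.TensorProduct.comm ℂ B Bᵐᵒᵖ).trans <|
    (Algebra.TensorProduct.congr AlgEquiv.refl (AlgEquiv.opOp ℂ B)).trans <|
      Algebra.TensorProduct.opAlgEquiv ℂ ℂ B Bᵐᵒᵖ

@[simp]
lemma swapOp_tmul (a : B) (b : Bᵐᵒᵖ) : swapOp B (a ⊗ₜ b) = op (unop b ⊗ₜ op a) := rfl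

lemma rightContraction_eq_leftContraction_swapOp (t : B ⊗[ℂ] Bᵐᵒᵖ) :
    rightContraction B t = leftContraction B (swapOp B t).unop := by
  induction t using TensorProduct.induction_on with
  | zero => simp
  | tmul a b => simp
  | add u v hu hv => simp [hu, hv]

variable (B) in
def contractionKernel : NonUnitalSubalgebra ℂ (B ⊗[ℂ] Bᵐᵒᵖ) where
  carrier := {t | leftContraction B t = 0 ∧ rightContraction B t = 0}
  add_mem' := by
    rintro x y ⟨hx, hx'⟩ ⟨hy, hy'⟩
    simp [hx, hx', hy, hy']
  zero_mem' := by simp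
  smul_mem' := by
    rintro r x ⟨hx, hx'⟩
    simp [hx, hx']
  mul_mem' := by
    rintro x y ⟨-, hx⟩ ⟨hy, -⟩
    constructor
    · rw [leftContraction_eq_mulLeftRight_apply_one, map_mul, Module.End.mul_apply,
        ← leftContraction_eq_mulLeftRight_apply_one, hy, map_zero]
    · rw [rightContraction_eq_leftContraction_swapOp, map_mul, unop_mul,
        leftContraction_eq_mulLeftRight_apply_one, map_mul, Module.End.mul_apply,
        ← leftContraction_eq_mulLeftRight_apply_one, ← rightContraction_eq_leftContraction_swapOp,
        hx, map_zero]

@[simp]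
lemma mem_contractionKernel {t : B ⊗[ℂ] Bᵐᵒᵖ} :
    t ∈ contractionKernel B ↔ leftContraction B t = 0 ∧ rightContraction B t = 0 :=
  Iff.rfl

def adElement (a : B) : B ⊗[ℂ] Bᵐᵒᵖ := a ⊗ₜ 1 - 1 ⊗ₜ op a

variable (B) in
def adSubalgebra : NonUnitalSubalgebra ℂ (B ⊗[ℂ] Bᵐᵒᵖ) :=
  NonUnitalAlgebra.adjoin ℂ {y | ∃ a : B, y = adElement a}

lemma mem_adSubalgebra_of_smul_mem {r : ℂ} (hr : r ≠ 0) {t : B ⊗[ℂ] Bᵐᵒᵖ}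
    (h : r • t ∈ adSubalgebra B) : t ∈ adSubalgebra B :=
  (Submodule.smul_mem_iff (p := (adSubalgebra B).toSubmodule) hr).1 h

lemma adElement_mem_adSubalgebra (a : B) : adElement a ∈ adSubalgebra B :=
  NonUnitalAlgebra.subset_adjoin ℂ ⟨a, rfl⟩

lemma adSubalgebra_le_contractionKernel : adSubalgebra B ≤ contractionKernel B :=
  NonUnitalAlgebra.adjoin_le <| by
    rintro _ ⟨a, rfl⟩
    simp [adElement]

lemma adElement_mul_adElement (a : B) (b : Bᵐᵒᵖ) :
    adElement (unop b) * adElement a =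
      rightContraction B (a ⊗ₜ b) ⊗ₜ 1 + 1 ⊗ₜ op (leftContraction B (a ⊗ₜ b)) -
        a ⊗ₜ b - (swapOp B (a ⊗ₜ b)).unop := by
  simp only [adElement, sub_mul, mul_sub, Algebra.TensorProduct.tmul_mul_tmul, one_mul, mul_one,
    leftContraction_tmul, rightContraction_tmul, swapOp_tmul, unop_op, op_unop]
  abel

lemma add_swapOp_sub_mem_adSubalgebra (t : B ⊗[ℂ] Bᵐᵒᵖ) :
    t + (swapOp B t).unop - rightContraction B t ⊗ₜ 1 - 1 ⊗ₜ op (leftContraction B t) ∈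
      adSubalgebra B := by
  induction t using TensorProduct.induction_on with
  | zero => simp
  | tmul a b =>
    convert neg_mem (mul_mem (adElement_mem_adSubalgebra (unop b)) (adElement_mem_adSubalgebra a))
      using 1
    rw [adElement_mul_adElement]
    abel
  | add u v hu hv =>
    convert add_mem hu hv using 1
    simp only [map_add, unop_add, TensorProduct.add_tmul, op_add, TensorProduct.tmul_add]
    abel

lemma add_swapOp_mem_adSubalgebra {t : B ⊗[ℂ] Bᵐᵒᵖ} (ht : t ∈ contractionKernel B) :
    t + (swapOp B t).unop ∈ adSubalgebra B := by
  simpa [ht.1, ht.2] using add_swapOp_sub_mem_adSubalgebra t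

end General

lemma Matrix.eq_zero_of_subsingleton_of_trace_eq_zero {ι R : Type*} [Fintype ι] [Subsingleton ι]
    [AddCommMonoid R] {y : Matrix ι ι R} (hy : y.trace = 0) : y = 0 := by
  ext i j
  obtain rfl := Subsingleton.elim i j
  simpa [Matrix.trace, Fintype.sum_subsingleton _ i] using hy

section MatrixAlgebra

open Matrix

variable {ι : Type*} [Fintype ι] [DecidableEq ι]

local notation "Mat" => Matrix ι ι ℂ
local notation "ρ" => AlgHom.mulLeftRight ℂ Mat

lemma mulLeftRight_matrix_injective : Function.Injective ρ :=
  Function.LeftInverse.injective (g := AlgHom.mulLeftRightMatrix_inv ℂ ι)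
    (LinearMap.congr_fun (AlgHom.mulLeftRightMatrix.inv_comp ℂ ι))

lemma trace_rightContraction_mul (t : Mat ⊗[ℂ] Matᵐᵒᵖ) (x : Mat) :
    trace (rightContraction Mat t * x) = trace (ρ t x) := by
  induction t using TensorProduct.induction_on with
  | zero => simp
  | tmul a b => simp [Matrix.mul_assoc, trace_mul_comm (unop b)]
  | add u v hu hv => simp [Matrix.add_mul, hu, hv]

lemma trace_mulLeftRight_swapOp_mul (t : Mat ⊗[ℂ] Matᵐᵒᵖ) (x w : Mat) :
    trace (ρ (swapOp Mat t).unop x * w) = trace (x * ρ t w) := by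
  induction t using TensorProduct.induction_on with
  | zero => simp
  | tmul a b => simp [Matrix.mul_assoc, trace_mul_comm (unop b)]
  | add u v hu hv => simp [Matrix.add_mul, Matrix.mul_add, hu, hv]

def rankOneTensor (y z : Mat) : Mat ⊗[ℂ] Matᵐᵒᵖ :=
  AlgHom.mulLeftRightMatrix_inv ℂ ι ((traceLinearMap ι ℂ ℂ ∘ₗ LinearMap.mulLeft ℂ y).smulRight z)

@[simp]
lemma mulLeftRight_rankOneTensor (y z x : Mat) : ρ (rankOneTensor y z) x = trace (y * x) • z := by
  have h := LinearMap.congr_fun (AlgHom.mulLeftRightMatrix.comp_inv ℂ ι)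
    ((traceLinearMap ι ℂ ℂ ∘ₗ LinearMap.mulLeft ℂ y).smulRight z)
  exact LinearMap.congr_fun h x

lemma rankOneTensor_add_left (y y' z : Mat) :
    rankOneTensor (y + y') z = rankOneTensor y z + rankOneTensor y' z :=
  mulLeftRight_matrix_injective <| by ext1 x; simp [Matrix.add_mul, add_smul]

lemma rankOneTensor_add_right (y z z' : Mat) :
    rankOneTensor y (z + z') = rankOneTensor y z + rankOneTensor y z' :=
  mulLeftRight_matrix_injective <| by ext1 x; simp

lemma rankOneTensor_smul_left (r : ℂ) (y z : Mat) :
    rankOneTensor (r • y) z = r • rankOneTensor y z :=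
  mulLeftRight_matrix_injective <| by ext1 x; simp [mul_smul]

lemma rankOneTensor_smul_right (r : ℂ) (y z : Mat) :
    rankOneTensor y (r • z) = r • rankOneTensor y z :=
  mulLeftRight_matrix_injective <| by ext1 x; simp [smul_comm r]

lemma leftContraction_rankOneTensor (y z : Mat) :
    leftContraction Mat (rankOneTensor y z) = trace y • z := by
  simp [leftContraction_eq_mulLeftRight_apply_one]

lemma rightContraction_rankOneTensor (y z : Mat) :
    rightContraction Mat (rankOneTensor y z) = trace z • y :=
  ext_iff_trace_mul_right.2 fun x => by
    simp [trace_rightContraction_mul, trace_smul, mul_comm]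

lemma swapOp_rankOneTensor (y z : Mat) :
    (swapOp Mat (rankOneTensor y z)).unop = rankOneTensor z y :=
  mulLeftRight_matrix_injective <| LinearMap.ext fun x => ext_iff_trace_mul_right.2 fun w => by
    simp [trace_mulLeftRight_swapOp_mul, trace_smul, trace_mul_comm x z, mul_comm]

lemma rankOneTensor_mul_rankOneTensor (y z y' z' : Mat) :
    rankOneTensor y z * rankOneTensor y' z' = trace (y * z') • rankOneTensor y' z :=
  mulLeftRight_matrix_injective <| by ext1 x; simp [smul_smul, mul_comm]

lemma rankOneTensor_add_swap_mem {y z : Mat} (hy : trace y = 0) (hz : trace z = 0) :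
    rankOneTensor y z + rankOneTensor z y ∈ adSubalgebra Mat := by
  simpa [swapOp_rankOneTensor, leftContraction_rankOneTensor, rightContraction_rankOneTensor, hy,
    hz] using add_swapOp_sub_mem_adSubalgebra (rankOneTensor y z)

lemma rankOneTensor_self_mem {d : Mat} (hd : trace d = 0) : rankOneTensor d d ∈ adSubalgebra Mat :=
  mem_adSubalgebra_of_smul_mem two_ne_zero <| by
    simpa [two_smul] using rankOneTensor_add_swap_mem hd hd

lemma rankOneTensor_sub_swap_mem_of_trace_mul_self_ne_zero {d u : Mat} (hd : trace d = 0)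
    (hu : trace u = 0) (hdd : trace (d * d) ≠ 0) :
    rankOneTensor d u - rankOneTensor u d ∈ adSubalgebra Mat := by
  set s := rankOneTensor d u + rankOneTensor u d
  have hcomm : s * rankOneTensor d d - rankOneTensor d d * s =
      trace (d * d) • (rankOneTensor d u - rankOneTensor u d) := by
    simp only [s, add_mul, mul_add, rankOneTensor_mul_rankOneTensor, trace_mul_comm u d, smul_sub]
    abel
  have hs : s ∈ adSubalgebra Mat := rankOneTensor_add_swap_mem hd hu
  refine mem_adSubalgebra_of_smul_mem hdd ?_
  rw [← hcomm]
  exact sub_mem (mul_mem hs (rankOneTensor_self_mem hd)) (mul_mem (rankOneTensor_self_mem hd) hs)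

lemma exists_trace_mul_self_add_smul_ne_zero {d : Mat} (hdd : trace (d * d) ≠ 0) (w : Mat) :
    ∃ r : ℂ, trace ((w + r • d) * (w + r • d)) ≠ 0 := by
  have hq : ∀ r : ℂ, trace ((w + r • d) * (w + r • d)) =
      trace (w * w) + r * (trace (w * d) + trace (d * w)) + r ^ 2 * trace (d * d) := by
    intro r
    simp only [add_mul, mul_add, Matrix.smul_mul, Matrix.mul_smul, trace_add, trace_smul,
      smul_eq_mul, smul_smul]
    ring
  by_contra! h
  have h0 := h 0
  have h1 := h 1
  have h2 := h (-1)
  rw [hq] at h0 h1 h2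
  -- the second difference of the quadratic `hq` at `0` is `2 * trace (d * d)`
  exact hdd (by linear_combination (h1 + h2 - 2 * h0) / 2)

lemma exists_trace_eq_zero_trace_mul_self_ne_zero [Nontrivial ι] :
    ∃ d : Mat, trace d = 0 ∧ trace (d * d) ≠ 0 := by
  obtain ⟨i, j, hij⟩ := exists_pair_ne ι
  refine ⟨single i i 1 - single j j 1, by simp, ?_⟩
  simp [sub_mul, mul_sub, hij, hij.symm]

lemma rankOneTensor_sub_swap_mem [Nontrivial ι] {w u : Mat} (hw : trace w = 0)
    (hu : trace u = 0) : rankOneTensor w u - rankOneTensor u w ∈ adSubalgebra Mat := by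
  obtain ⟨d, hd, hdd⟩ := exists_trace_eq_zero_trace_mul_self_ne_zero (ι := ι)
  obtain ⟨r, hr⟩ := exists_trace_mul_self_add_smul_ne_zero hdd w
  have hwd : trace (w + r • d) = 0 := by simp [hw, hd]
  have key : rankOneTensor w u - rankOneTensor u w =
      (rankOneTensor (w + r • d) u - rankOneTensor u (w + r • d)) -
        r • (rankOneTensor d u - rankOneTensor u d) := by
    simp only [rankOneTensor_add_left, rankOneTensor_add_right, rankOneTensor_smul_left,
      rankOneTensor_smul_right, smul_sub]
    abel
  rw [key]
  exact sub_mem (rankOneTensor_sub_swap_mem_of_trace_mul_self_ne_zero hwd hu hr)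
    (SMulMemClass.smul_mem r (rankOneTensor_sub_swap_mem_of_trace_mul_self_ne_zero hd hu hdd))

lemma rankOneTensor_mem {y z : Mat} (hy : trace y = 0) (hz : trace z = 0) :
    rankOneTensor y z ∈ adSubalgebra Mat := by
  cases subsingleton_or_nontrivial ι with
  | inl _ =>
    rw [Matrix.eq_zero_of_subsingleton_of_trace_eq_zero hy, ← zero_smul ℂ (0 : Mat),
      rankOneTensor_smul_left, zero_smul]
    exact zero_mem _
  | inr _ =>
    refine mem_adSubalgebra_of_smul_mem two_ne_zero ?_
    convert add_mem (rankOneTensor_add_swap_mem hy hz) (rankOneTensor_sub_swap_mem hy hz) using 1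
    rw [two_smul]
    abel

noncomputable def tracelessPart (y : Mat) : Mat := y - ((Fintype.card ι : ℂ)⁻¹ * trace y) • 1

lemma trace_tracelessPart (y : Mat) : trace (tracelessPart y) = 0 := by
  rcases isEmpty_or_nonempty ι with _ | _
  · simp [Subsingleton.elim (tracelessPart y) 0]
  · have hcard : (Fintype.card ι : ℂ) ≠ 0 := by exact_mod_cast Fintype.card_ne_zero
    simp [tracelessPart]
    field_simp
    ring

lemma trace_tracelessPart_mul (y x : Mat) :
    trace (tracelessPart y * x) = trace (y * tracelessPart x) := by
  simp only [tracelessPart, sub_mul, mul_sub, Matrix.smul_mul, Matrix.mul_smul, Matrix.one_mul,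
    Matrix.mul_one, trace_sub, trace_smul, smul_eq_mul]
  ring

lemma eq_sum_rankOneTensor {t : Mat ⊗[ℂ] Matᵐᵒᵖ} (ht : ρ t 1 = 0) :
    t = ∑ k, ∑ l, rankOneTensor (tracelessPart (single l k 1)) (ρ t (single k l 1)) :=
  mulLeftRight_matrix_injective <| by
    ext1 x
    have hx : tracelessPart x =
        ∑ k, ∑ l, trace (single l k 1 * tracelessPart x) • single k l 1 := by
      simpa [trace_single_mul, smul_single] using matrix_eq_sum_single (tracelessPart x)
    calc ρ t x = ρ t (tracelessPart x) := by simp [tracelessPart, ht]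
      _ = _ := by
        rw [hx]
        simp only [map_sum, map_smul, LinearMap.sum_apply, mulLeftRight_rankOneTensor,
          trace_tracelessPart_mul]

lemma contractionKernel_le_adSubalgebra : contractionKernel Mat ≤ adSubalgebra Mat := by
  rintro t ⟨hL, hR⟩
  rw [leftContraction_eq_mulLeftRight_apply_one] at hL
  rw [eq_sum_rankOneTensor hL]
  refine sum_mem fun k _ => sum_mem fun l _ => rankOneTensor_mem (trace_tracelessPart _) ?_
  rw [← trace_rightContraction_mul, hR, Matrix.zero_mul, trace_zero]

theorem adSubalgebra_eq_contractionKernel : adSubalgebra Mat = contractionKernel Mat :=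
  le_antisymm adSubalgebra_le_contractionKernel contractionKernel_le_adSubalgebra

end MatrixAlgebra

/-- For `B = M_n(ℂ)`, the subalgebra `T(B)` of `B ⊗ B^op` generated by all
`a⊗1 - 1⊗a` equals `N(B) = {Σ aᵢ⊗bᵢ : Σ aᵢbᵢ = 0 and Σ bᵢaᵢ = 0}`. -/
theorem stmt15 (n : ℕ) :
    ((NonUnitalAlgebra.adjoin ℂ
        {y : Matrix (Fin n) (Fin n) ℂ ⊗[ℂ] (Matrix (Fin n) (Fin n) ℂ)ᵐᵒᵖ |
          ∃ a : Matrix (Fin n) (Fin n) ℂ,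
            y = a ⊗ₜ[ℂ] (1 : (Matrix (Fin n) (Fin n) ℂ)ᵐᵒᵖ) -
                (1 : Matrix (Fin n) (Fin n) ℂ) ⊗ₜ[ℂ] MulOpposite.op a} :
        Set (Matrix (Fin n) (Fin n) ℂ ⊗[ℂ] (Matrix (Fin n) (Fin n) ℂ)ᵐᵒᵖ)) =
      {t | leftContraction (Matrix (Fin n) (Fin n) ℂ) t = 0 ∧
           rightContraction (Matrix (Fin n) (Fin n) ℂ) t = 0}) :=
  congrArg SetLike.coe (adSubalgebra_eq_contractionKernel (ι := Fin n))
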